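/- arXiv:2203.16100 — 8 statements merged into one kernel-verified Lean document; each statement's English description precedes it below -/
import Mathlib

section
/- Let m ≥ 2 and let h, h' : Fin m → ℤ satisfy h i ≤ h' i ≤ h i + 1 for every i. Then for every j with 1 ≤ j ≤ m − 1, the gap utilities u(j) = h_(j) − h_(j+1) and u'(j) = h'_(j) − h'_(j+1) satisfy |u(j) − u'(j)| ≤ 1. In particular, the utility function j ↦ h_(j) − h_(j+1) + r(j) (for any fixed regularizer r : Fin (m−1) → ℝ) has sensitivity at most 1 with respect to adding or removing one user. -/
/-!
The `k`-th smallest entry of a tuple `f` is at most `a` exactly when more than `k` entries of `f`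
are at most `a`. Hence order statistics are monotone: if `f ≤ g + c` entrywise, every order
statistic of `f` is at most the corresponding one of `g` plus `c`. Applied to `h ≤ h' ≤ h + 1`,
each `h'_(k)` lies in `[h_(k), h_(k) + 1]`, so the gap `h_(j) - h_(j+1)` moves by at most one.
-/

/-- `kthLargest h k` is the `k`-th largest entry of `h` (0-indexed: `k = 0` is the
largest). -/
def kthLargest {m : ℕ} (h : Fin m → ℤ) (k : Fin m) : ℤ :=
  h (Tuple.sort h k.rev)

/-- The gap utility `u(j) = h_(j) - h_(j+1)` where `h_(j)` denotes the `j`-th largest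
entry (1-indexed, so `1 ≤ j ≤ m - 1`). -/
def gapU {m : ℕ} (h : Fin m → ℤ) (j : ℕ) (h1 : 1 ≤ j) (h2 : j < m) : ℤ :=
  kthLargest h ⟨j - 1, by omega⟩ - kthLargest h ⟨j, h2⟩

open Finset

namespace Tuple

variable {n : ℕ} {α : Type*} [LinearOrder α]

theorem apply_sort_le_iff_lt_card (f : Fin n → α) (k : Fin n) (a : α) :
    f (sort f k) ≤ a ↔ k < #{i | f i ≤ a} := by
  have hcard : #{i | f (sort f i) ≤ a} = #{i | f i ≤ a} :=
    card_equiv (sort f) (by simp)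
  rw [← hcard]
  exact (lt_card_le_iff_apply_le_of_monotone (f := f ∘ sort f) (monotone_sort f)).symm

theorem apply_sort_le_apply_sort_add [Add α] [AddRightMono α] {f g : Fin n → α} {c : α}
    (hfg : ∀ i, f i ≤ g i + c) (k : Fin n) :
    f (sort f k) ≤ g (sort g k) + c := by
  rw [apply_sort_le_iff_lt_card]
  calc (k : ℕ) < #{i | g i ≤ g (sort g k)} := (apply_sort_le_iff_lt_card g k _).1 le_rfl
    _ ≤ #{i | f i ≤ g (sort g k) + c} :=
      card_le_card fun i hi ↦ by
        simp only [mem_filter, mem_univ, true_and] at hi ⊢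
        exact (hfg i).trans (by gcongr)

end Tuple

theorem kthLargest_le_kthLargest_add {m : ℕ} {f g : Fin m → ℤ} {c : ℤ}
    (hfg : ∀ i, f i ≤ g i + c) (k : Fin m) :
    kthLargest f k ≤ kthLargest g k + c :=
  Tuple.apply_sort_le_apply_sort_add hfg k.rev

theorem gap_utility_sensitivity_one {m : ℕ} (h h' : Fin m → ℤ)
    (hnb : ∀ i, h i ≤ h' i ∧ h' i ≤ h i + 1)
    (j : ℕ) (h1 : 1 ≤ j) (h2 : j ≤ m - 1) :
    |gapU h j h1 (by omega) - gapU h' j h1 (by omega)| ≤ 1 ∧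
      ∀ r : ℕ → ℝ,
        |(((gapU h j h1 (by omega) : ℤ) : ℝ) + r j) -
            (((gapU h' j h1 (by omega) : ℤ) : ℝ) + r j)| ≤ 1 := by
  have lower (k : Fin m) : kthLargest h k ≤ kthLargest h' k := by
    simpa using kthLargest_le_kthLargest_add (c := 0) (fun i ↦ by simpa using (hnb i).1) k
  have upper (k : Fin m) : kthLargest h' k ≤ kthLargest h k + 1 :=
    kthLargest_le_kthLargest_add (fun i ↦ (hnb i).2) k
  have key : |gapU h j h1 (by omega) - gapU h' j h1 (by omega)| ≤ 1 := by
    have := lower ⟨j - 1, by omega⟩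
    have := lower ⟨j, by omega⟩
    have := upper ⟨j - 1, by omega⟩
    have := upper ⟨j, by omega⟩
    rw [gapU, gapU, abs_le]
    omega
  refine ⟨key, fun r ↦ ?_⟩
  rw [add_sub_add_right_eq_sub]
  exact_mod_cast key
end

section
/- Let m ≥ 2, 1 ≤ k ≤ m − 1, and let h, h' : Fin m → ℤ be neighboring in the sense that either h i ≤ h' i ≤ h i + 1 for every i, or h' i ≤ h i ≤ h' i + 1 for every i. If the gap q_k(h) = h_(k) − h_(k+1) satisfies q_k(h) > 1, then the top-k index set is stable: the set {i : h i ≥ h_(k)} equals the set {i : h' i ≥ h'_(k)}, and this set has exactly k elements. (Equivalently, the local sensitivity of releasing the unordered top-k index set is 0 whenever q_k(h) > 1.) -/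
/-- `kth h k _ _` is the `k`-th largest entry of `h`, 1-indexed (`1 ≤ k ≤ m`). -/
def kth {m : ℕ} (h : Fin m → ℤ) (k : ℕ) (h1 : 1 ≤ k) (h2 : k ≤ m) : ℤ :=
  kthLargest h ⟨k - 1, by omega⟩

section

open Finset

theorem Monotone.le_apply_iff_le_card_filter {α : Type*} [LinearOrder α] {m : ℕ}
    {g : Fin m → α} (hg : Monotone g) (j : Fin m) (t : α) :
    t ≤ g j ↔ m - j ≤ #{i | t ≤ g i} := by
  constructor
  · intro ht
    calc m - j = #(Ici j) := (Fin.card_Ici j).symm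
      _ ≤ #{i | t ≤ g i} := card_le_card fun i hi =>
          mem_filter.2 ⟨mem_univ i, ht.trans (hg (mem_Ici.1 hi))⟩
  · intro hcard
    by_contra! hlt
    have hsub : (univ.filter fun i => t ≤ g i) ⊆ Ioi j := fun i hi => by
      by_contra hij
      exact ((hg (not_lt.1 (mt mem_Ioi.2 hij))).trans_lt hlt).not_ge (mem_filter.1 hi).2
    have := (card_le_card hsub).trans (Fin.card_Ioi j).le
    omega

theorem card_filter_comp_perm {ι : Type*} [Fintype ι] (p : ι → Prop) [DecidablePred p]
    (σ : Equiv.Perm ι) :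
    #{i | p (σ i)} = #{i | p i} :=
  card_equiv σ fun i => by simp

theorem le_kth_iff {m : ℕ} (h : Fin m → ℤ) (k : ℕ) (hk1 : 1 ≤ k) (hk : k ≤ m) (t : ℤ) :
    t ≤ kth h k hk1 hk ↔ k ≤ #{i | t ≤ h i} := by
  -- `Tuple.sort` sorts increasingly, so the `k`-th largest entry sits at index `m - k`.
  have hrev : m - ((Fin.rev ⟨k - 1, by omega⟩ : Fin m) : ℕ) = k := by
    rw [Fin.val_rev, Fin.val_mk]; omega
  have := (Tuple.monotone_sort h).le_apply_iff_le_card_filter (Fin.rev ⟨k - 1, by omega⟩) t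
  rwa [hrev, Function.comp_def, card_filter_comp_perm (fun i => t ≤ h i)] at this

theorem card_filter_le_eq_of_kth_lt_of_le_kth {m : ℕ} (h : Fin m → ℤ) (k : ℕ) (hk1 : 1 ≤ k)
    (hk : k + 1 ≤ m) {t : ℤ} (hlt : kth h (k + 1) (Nat.le_add_left 1 k) hk < t)
    (hle : t ≤ kth h k hk1 (k.le_succ.trans hk)) :
    #{i | t ≤ h i} = k := by
  have hge := (le_kth_iff h k hk1 _ t).1 hle
  have hnot := mt (le_kth_iff h (k + 1) (Nat.le_add_left 1 k) hk t).2 hlt.not_ge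
  omega

theorem filter_kth_le_eq_of_card_eq {m : ℕ} (h : Fin m → ℤ) (k : ℕ) (hk1 : 1 ≤ k)
    (hk : k ≤ m) {t : ℤ} (hcard : #{i | t ≤ h i} = k) :
    (univ.filter fun i => kth h k hk1 hk ≤ h i) = univ.filter fun i => t ≤ h i := by
  have ht : t ≤ kth h k hk1 hk := (le_kth_iff h k hk1 hk t).2 hcard.ge
  refine eq_of_subset_of_card_le (monotone_filter_right _ fun _ _ => ht.trans) ?_
  rw [hcard]
  exact (le_kth_iff h k hk1 hk _).1 le_rfl

theorem ne_sub_one_of_card_filter_le {ι : Type*} [Fintype ι] (h : ι → ℤ) (t : ℤ)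
    (hcard : #{i | t - 1 ≤ h i} ≤ #{i | t ≤ h i}) (i : ι) :
    h i ≠ t - 1 := by
  have hsame : (univ.filter fun i => t ≤ h i) = univ.filter fun i => t - 1 ≤ h i :=
    eq_of_subset_of_card_le (monotone_filter_right _ fun _ _ hi => by omega) hcard
  intro hi
  have hmem : i ∈ univ.filter fun i => t ≤ h i := hsame ▸ by simp [hi]
  simp only [mem_filter, mem_univ, true_and] at hmem
  omega

theorem filter_le_shift_eq {ι : Type*} [Fintype ι] {h h' : ι → ℤ} {a t : ℤ}
    (hshift : ∀ i, h i + a ≤ h' i ∧ h' i ≤ h i + a + 1) (hmiss : ∀ i, h i ≠ t - 1) :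
    (univ.filter fun i => t + a ≤ h' i) = univ.filter fun i => t ≤ h i := by
  ext i
  have := hshift i
  have := hmiss i
  simp only [mem_filter, mem_univ, true_and]
  omega

end

theorem topk_stable_of_large_gap {m : ℕ} (k : ℕ)
    (hk1 : 1 ≤ k) (hk2 : k ≤ m - 1) (h h' : Fin m → ℤ)
    (hnb : (∀ i, h i ≤ h' i ∧ h' i ≤ h i + 1) ∨ (∀ i, h' i ≤ h i ∧ h i ≤ h' i + 1))
    (hgap : kth h k hk1 (by omega) - kth h (k + 1) (by omega) (by omega) > 1) :
    Finset.univ.filter (fun i => kth h k hk1 (by omega) ≤ h i) =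
      Finset.univ.filter (fun i => kth h' k hk1 (by omega) ≤ h' i) ∧
    (Finset.univ.filter (fun i => kth h k hk1 (by omega) ≤ h i)).card = k := by
  set T := kth h k hk1 (by omega)
  have hcard := card_filter_le_eq_of_kth_lt_of_le_kth h k hk1 (by omega) (by omega) le_rfl
  have hcard_pred :=
    card_filter_le_eq_of_kth_lt_of_le_kth h k hk1 (by omega) (t := T - 1) (by omega) (by omega)
  have hmiss := ne_sub_one_of_card_filter_le h T (hcard_pred.trans hcard.symm).le
  obtain ⟨a, hshift⟩ : ∃ a : ℤ, ∀ i, h i + a ≤ h' i ∧ h' i ≤ h i + a + 1 := by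
    rcases hnb with hup | hdown
    · exact ⟨0, fun i => by have := hup i; omega⟩
    · exact ⟨-1, fun i => by have := hdown i; omega⟩
  have htop := filter_le_shift_eq hshift hmiss
  refine ⟨?_, hcard⟩
  rw [filter_kth_le_eq_of_card_eq h' k hk1 _ (htop ▸ hcard), htop]
end

section
/- Let ι be a nonempty finite index set, ε > 0, and u, u' : ι → ℝ with |u i − u' i| ≤ 1 for all i. Define the exponential-mechanism output distributions p i = exp((ε/2)·u i) / Σ_j exp((ε/2)·u j) and q i = exp((ε/2)·u' i) / Σ_j exp((ε/2)·u' j). Then for every i, p i ≤ exp(ε) · q i and q i ≤ exp(ε) · p i. (The exponential mechanism with sensitivity-1 utility and parameter ε/2 is ε-differentially private.) -/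
lemma exp_mech_one_side {ι : Type*} [Fintype ι] [Nonempty ι]
    (ε : ℝ) (hε : 0 < ε) (u u' : ι → ℝ) (hu : ∀ i, |u i - u' i| ≤ 1) (i : ι) :
    Real.exp (ε / 2 * u i) / (∑ j, Real.exp (ε / 2 * u j)) ≤
      Real.exp ε * (Real.exp (ε / 2 * u' i) / (∑ j, Real.exp (ε / 2 * u' j))) := by
  have hhalf : (0:ℝ) < ε / 2 := by linarith
  have hDpos : 0 < ∑ j, Real.exp (ε / 2 * u j) :=
    Finset.sum_pos (fun j _ => Real.exp_pos _) Finset.univ_nonempty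
  have hD'pos : 0 < ∑ j, Real.exp (ε / 2 * u' j) :=
    Finset.sum_pos (fun j _ => Real.exp_pos _) Finset.univ_nonempty
  -- numerator bound: exp(ε/2 u i) ≤ exp(ε/2) * exp(ε/2 u' i)
  have hnum : Real.exp (ε / 2 * u i) ≤ Real.exp (ε / 2) * Real.exp (ε / 2 * u' i) := by
    rw [← Real.exp_add]
    apply Real.exp_le_exp.mpr
    have := abs_le.mp (hu i)
    nlinarith [this.1, this.2]
  -- denominator bound: Σ exp(ε/2 u' j) ≤ exp(ε/2) * Σ exp(ε/2 u j)
  have hden : (∑ j, Real.exp (ε / 2 * u' j)) ≤ Real.exp (ε / 2) * ∑ j, Real.exp (ε / 2 * u j) := by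
    rw [Finset.mul_sum]
    apply Finset.sum_le_sum
    intro j _
    rw [← Real.exp_add]
    apply Real.exp_le_exp.mpr
    have := abs_le.mp (hu j)
    nlinarith [this.1, this.2]
  have hee : Real.exp ε = Real.exp (ε / 2) * Real.exp (ε / 2) := by
    rw [← Real.exp_add]; ring_nf
  rw [div_le_iff₀ hDpos, hee]
  have h1 : Real.exp (ε / 2) * Real.exp (ε / 2) * ((Real.exp (ε / 2 * u' i) /
      (∑ j, Real.exp (ε / 2 * u' j))) * (∑ j, Real.exp (ε / 2 * u j)))
      = Real.exp (ε / 2) * Real.exp (ε / 2 * u' i) *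
        ((Real.exp (ε / 2) * ∑ j, Real.exp (ε / 2 * u j)) / (∑ j, Real.exp (ε / 2 * u' j))) := by
    field_simp
  rw [mul_assoc (Real.exp (ε / 2) * Real.exp (ε / 2)), h1]
  calc Real.exp (ε / 2 * u i) ≤ Real.exp (ε / 2) * Real.exp (ε / 2 * u' i) := hnum
    _ ≤ _ := by
        apply le_mul_of_one_le_right (by positivity)
        rw [le_div_iff₀ hD'pos, one_mul]
        exact hden

theorem exponential_mechanism_pure_dp {ι : Type*} [Fintype ι] [Nonempty ι]
    (ε : ℝ) (hε : 0 < ε) (u u' : ι → ℝ) (hu : ∀ i, |u i - u' i| ≤ 1) (i : ι) :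
    Real.exp (ε / 2 * u i) / (∑ j, Real.exp (ε / 2 * u j)) ≤
      Real.exp ε * (Real.exp (ε / 2 * u' i) / (∑ j, Real.exp (ε / 2 * u' j))) ∧
    Real.exp (ε / 2 * u' i) / (∑ j, Real.exp (ε / 2 * u' j)) ≤
      Real.exp ε * (Real.exp (ε / 2 * u i) / (∑ j, Real.exp (ε / 2 * u j))) := by
  refine ⟨exp_mech_one_side ε hε u u' hu i, exp_mech_one_side ε hε u' u ?_ i⟩
  intro j; rw [abs_sub_comm]; exact hu j
end

section
/- Let ι be a nonempty finite index set, ε > 0, α > 1, and u, u' : ι → ℝ with |u i − u' i| ≤ 1 for all i. Define p i = exp((ε/2)·u i) / Σ_j exp((ε/2)·u j) and q i = exp((ε/2)·u' i) / Σ_j exp((ε/2)·u' j). Then the Rényi divergence of order α between p and q satisfies (1/(α−1)) · log( Σ_i p i^α · q i^(1−α) ) ≤ α·ε²/8. (The exponential mechanism with sensitivity-1 utility and parameter ε/2 satisfies (ε²/8)-zCDP.) -/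
/-!
The privacy loss `X i = log (p i / q i)` of the exponential mechanism is `(ε/2)(u i - u' i)` plus a
constant, so it ranges over an interval of length `ε`. Since
`p i ^ α * q i ^ (1 - α) = p i * exp ((α - 1) * X i)`, the Rényi sum is the moment generating
function of `X` under `p` at `α - 1`, and Hoeffding's lemma bounds its logarithm by
`(α - 1) E_p[X] + (α - 1)² ε² / 8`. Hoeffding's lemma at `-1`, where `E_p[e^{-X}] = ∑ q = 1`,
bounds the Kullback–Leibler term `E_p[X]` by `ε² / 8`.
-/

open Real Finset MeasureTheory ProbabilityTheory

section

variable {ι : Type*} [Fintype ι]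

theorem sum_mul_exp_le_of_mem_Icc {w X : ι → ℝ}
    (hw : ∀ i, 0 ≤ w i) (hw1 : ∑ i, w i = 1) {a b : ℝ} (hX : ∀ i, X i ∈ Set.Icc a b) (t : ℝ) :
    ∑ i, w i * exp (t * X i) ≤ exp (t * ∑ i, w i * X i + t ^ 2 * (b - a) ^ 2 / 8) := by
  let _ : MeasurableSpace ι := ⊤
  let P : PMF ι := PMF.ofFintype (fun i ↦ ENNReal.ofReal (w i)) <| by
    rw [← ENNReal.ofReal_sum_of_nonneg fun i _ ↦ hw i, hw1, ENNReal.ofReal_one]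
  have integral_eq (f : ι → ℝ) : ∫ i, f i ∂P.toMeasure = ∑ i, w i * f i := by
    simp [P, PMF.integral_eq_sum, PMF.ofFintype_apply, ENNReal.toReal_ofReal (hw _)]
  have hoeffding := (hasSubgaussianMGF_of_mem_Icc (X := X) (μ := P.toMeasure)
    (measurable_of_finite X).aemeasurable (ae_of_all _ hX)).mgf_le t
  simp only [mgf, integral_eq] at hoeffding
  have variance_proxy : ((‖b - a‖₊ / 2) ^ 2 : NNReal) * t ^ 2 / 2 = t ^ 2 * (b - a) ^ 2 / 8 := by
    push_cast
    rw [norm_eq_abs, div_pow, sq_abs]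
    ring
  calc ∑ i, w i * exp (t * X i)
      = exp (t * ∑ i, w i * X i) * ∑ i, w i * exp (t * (X i - ∑ i, w i * X i)) := by
        simp only [mul_sum, mul_sub, exp_sub]
        congr 1 with i
        field_simp
    _ ≤ _ := by
        rw [exp_add, ← variance_proxy]
        gcongr

theorem sum_mul_log_div_le_of_mem_Icc {p q : ι → ℝ}
    (hp : ∀ i, 0 < p i) (hq : ∀ i, 0 < q i) (hp1 : ∑ i, p i = 1) (hq1 : ∑ i, q i = 1)
    {a b : ℝ} (hpq : ∀ i, log (p i / q i) ∈ Set.Icc a b) :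
    ∑ i, p i * log (p i / q i) ≤ (b - a) ^ 2 / 8 := by
  have tilt (i : ι) : p i * exp (-1 * log (p i / q i)) = q i := by
    rw [neg_one_mul, exp_neg, exp_log (div_pos (hp i) (hq i)), inv_div,
      mul_div_cancel₀ _ (hp i).ne']
  have hoeffding := sum_mul_exp_le_of_mem_Icc (fun i ↦ (hp i).le) hp1 hpq (-1)
  simp only [tilt, hq1] at hoeffding
  linarith [one_le_exp_iff.mp hoeffding]

theorem rpow_mul_rpow_one_sub_eq {x y : ℝ} (hx : 0 < x) (hy : 0 < y) (α : ℝ) :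
    x ^ α * y ^ (1 - α) = x * exp ((α - 1) * log (x / y)) := by
  rw [rpow_def_of_pos hx, rpow_def_of_pos hy, ← exp_add, log_div hx.ne' hy.ne',
    show log x * α + log y * (1 - α) = log x + (α - 1) * (log x - log y) by ring,
    exp_add, exp_log hx]

theorem renyi_le_of_log_div_mem_Icc {p q : ι → ℝ}
    (hp : ∀ i, 0 < p i) (hq : ∀ i, 0 < q i) (hp1 : ∑ i, p i = 1) (hq1 : ∑ i, q i = 1)
    {a b : ℝ} (hpq : ∀ i, log (p i / q i) ∈ Set.Icc a b) {α : ℝ} (hα : 1 < α) :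
    1 / (α - 1) * log (∑ i, p i ^ α * q i ^ (1 - α)) ≤ α * (b - a) ^ 2 / 8 := by
  have hα' : 0 < α - 1 := sub_pos.mpr hα
  have hoeffding := sum_mul_exp_le_of_mem_Icc (fun i ↦ (hp i).le) hp1 hpq (α - 1)
  have hkl := sum_mul_log_div_le_of_mem_Icc hp hq hp1 hq1 hpq
  simp only [rpow_mul_rpow_one_sub_eq (hp _) (hq _)]
  rw [← log_le_iff_le_exp (sum_pos (fun i _ ↦ mul_pos (hp i) (exp_pos _))
    (nonempty_of_sum_ne_zero (hp1 ▸ one_ne_zero)))] at hoeffding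
  calc 1 / (α - 1) * log (∑ i, p i * exp ((α - 1) * log (p i / q i)))
      ≤ 1 / (α - 1) * ((α - 1) * ∑ i, p i * log (p i / q i) + (α - 1) ^ 2 * (b - a) ^ 2 / 8) := by
        gcongr
    _ = ∑ i, p i * log (p i / q i) + (α - 1) * (b - a) ^ 2 / 8 := by
        field_simp
    _ ≤ α * (b - a) ^ 2 / 8 := by
        linarith

noncomputable def gibbs (s : ℝ) (u : ι → ℝ) (i : ι) : ℝ :=
  exp (s * u i) / ∑ j, exp (s * u j)

section gibbs

variable [Nonempty ι]

theorem sum_exp_mul_pos (s : ℝ) (u : ι → ℝ) : 0 < ∑ j, exp (s * u j) :=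
  sum_pos (fun _ _ ↦ exp_pos _) univ_nonempty

theorem gibbs_pos (s : ℝ) (u : ι → ℝ) (i : ι) : 0 < gibbs s u i :=
  div_pos (exp_pos _) (sum_exp_mul_pos s u)

theorem sum_gibbs (s : ℝ) (u : ι → ℝ) : ∑ i, gibbs s u i = 1 := by
  unfold gibbs
  rw [← sum_div, div_self (sum_exp_mul_pos s u).ne']

theorem log_gibbs_div_gibbs (s : ℝ) (u u' : ι → ℝ) (i : ι) :
    log (gibbs s u i / gibbs s u' i) =
      s * (u i - u' i) + log ((∑ j, exp (s * u' j)) / ∑ j, exp (s * u j)) := by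
  have hZ := sum_exp_mul_pos s u
  have hZ' := sum_exp_mul_pos s u'
  rw [log_div (gibbs_pos s u i).ne' (gibbs_pos s u' i).ne']
  unfold gibbs
  rw [log_div (exp_pos _).ne' hZ.ne', log_div (exp_pos _).ne' hZ'.ne', log_div hZ'.ne' hZ.ne',
    log_exp, log_exp]
  ring

theorem log_gibbs_div_gibbs_mem_Icc (s : ℝ) {u u' : ι → ℝ} {Δ : ℝ} (hu : ∀ i, |u i - u' i| ≤ Δ)
    (i : ι) :
    log (gibbs s u i / gibbs s u' i) ∈
      Set.Icc (log ((∑ j, exp (s * u' j)) / ∑ j, exp (s * u j)) - |s| * Δ)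
        (log ((∑ j, exp (s * u' j)) / ∑ j, exp (s * u j)) + |s| * Δ) := by
  have hsu : |s * (u i - u' i)| ≤ |s| * Δ := by
    rw [abs_mul]
    exact mul_le_mul_of_nonneg_left (hu i) (abs_nonneg s)
  rw [log_gibbs_div_gibbs, Set.mem_Icc]
  constructor <;> linarith [abs_le.mp hsu]

end gibbs

end

theorem exponential_mechanism_zcdp_general {ι : Type*} [Fintype ι] [Nonempty ι]
    (ε α : ℝ) (hα : 1 < α)
    (u u' : ι → ℝ) (hu : ∀ i, |u i - u' i| ≤ 1) :
    (1 / (α - 1)) *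
        Real.log (∑ i,
          (Real.exp (ε / 2 * u i) / (∑ j, Real.exp (ε / 2 * u j))) ^ α *
            (Real.exp (ε / 2 * u' i) / (∑ j, Real.exp (ε / 2 * u' j))) ^ (1 - α)) ≤
      α * ε ^ 2 / 8 := by
  have h := renyi_le_of_log_div_mem_Icc (gibbs_pos (ε / 2) u) (gibbs_pos (ε / 2) u')
    (sum_gibbs _ u) (sum_gibbs _ u') (log_gibbs_div_gibbs_mem_Icc (ε / 2) hu) hα
  refine h.trans_eq ?_
  rw [add_sub_sub_cancel, mul_one, ← two_mul, mul_pow, sq_abs]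
  ring

theorem exponential_mechanism_zcdp {ι : Type*} [Fintype ι] [Nonempty ι]
    (ε α : ℝ) (hε : 0 < ε) (hα : 1 < α)
    (u u' : ι → ℝ) (hu : ∀ i, |u i - u' i| ≤ 1) :
    (1 / (α - 1)) *
        Real.log (∑ i,
          (Real.exp (ε / 2 * u i) / (∑ j, Real.exp (ε / 2 * u j))) ^ α *
            (Real.exp (ε / 2 * u' i) / (∑ j, Real.exp (ε / 2 * u' j))) ^ (1 - α)) ≤
      α * ε ^ 2 / 8 :=
  exponential_mechanism_zcdp_general ε α hα u u' hu
end

section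
/- Let ι be a nonempty finite index set, ε > 0, α > 1, and let p, q : ι → ℝ be probability vectors with all entries positive satisfying exp(−ε) ≤ p i / q i ≤ exp(ε) for all i (i.e., the pair is ε-pure-DP indistinguishable). Then Σ_i p i^α · q i^(1−α) ≤ (sinh(α·ε) − sinh((α−1)·ε)) / sinh(ε); equivalently, the Rényi divergence of order α satisfies D_α(p‖q) ≤ (1/(α−1))·log( (sinh(α·ε) − sinh((α−1)·ε)) / sinh(ε) ). -/
/-!
Writing `p i ^ α * q i ^ (1 - α) = q i * (p i / q i) ^ α`, the sum is an `f`-divergence with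
`f = (· ^ α)` convex, and every likelihood ratio lies in `[e^{-ε}, e^ε]`. Bounding `f` by its chord
over that interval turns each term into an affine function of `(p i, q i)`, so the sum is at most
the chord evaluated at the total likelihood ratio `1`, which is the stated `sinh` expression.
-/

open Finset Real Set

lemma ConvexOn.mul_le_chord {s : Set ℝ} {f : ℝ → ℝ} (hf : ConvexOn ℝ s f) {a b t : ℝ}
    (ha : a ∈ s) (hb : b ∈ s) (ht : t ∈ Icc a b) :
    (b - a) * f t ≤ (b - t) * f a + (t - a) * f b := by
  obtain ⟨hat, htb⟩ := ht
  rcases hat.eq_or_lt with rfl | hat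
  · nlinarith
  have hab : 0 < b - a := by linarith
  have hcomb : ((b - t) / (b - a)) • a + ((t - a) / (b - a)) • b = t := by
    simp only [smul_eq_mul]; field_simp; ring
  have hconv := hf.2 ha hb (div_nonneg (sub_nonneg.2 htb) hab.le : 0 ≤ (b - t) / (b - a))
    (div_nonneg (sub_nonneg.2 hat.le) hab.le) (by field_simp; ring)
  rw [hcomb, smul_eq_mul, smul_eq_mul] at hconv
  calc (b - a) * f t ≤ (b - a) * ((b - t) / (b - a) * f a + (t - a) / (b - a) * f b) := by gcongr
    _ = _ := by field_simp

lemma ConvexOn.sum_mul_comp_div_le {ι : Type*} [Fintype ι] {s : Set ℝ} {f : ℝ → ℝ}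
    (hf : ConvexOn ℝ s f) {a b : ℝ} (ha : a ∈ s) (hb : b ∈ s) {p q : ι → ℝ}
    (hq : ∀ i, 0 < q i) (hps : ∑ i, p i = 1) (hqs : ∑ i, q i = 1)
    (hratio : ∀ i, p i / q i ∈ Icc a b) :
    (b - a) * ∑ i, q i * f (p i / q i) ≤ (b - 1) * f a + (1 - a) * f b := by
  have hpoint (i : ι) : q i * ((b - a) * f (p i / q i)) ≤
      (b * q i - p i) * f a + (p i - a * q i) * f b := by
    have hqi := hq i
    calc q i * ((b - a) * f (p i / q i))
        ≤ q i * ((b - p i / q i) * f a + (p i / q i - a) * f b) := by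
          gcongr; exact hf.mul_le_chord ha hb (hratio i)
      _ = _ := by field_simp
  calc (b - a) * ∑ i, q i * f (p i / q i) = ∑ i, q i * ((b - a) * f (p i / q i)) := by
        rw [mul_sum]; exact sum_congr rfl fun i _ => by ring
    _ ≤ ∑ i, ((b * q i - p i) * f a + (p i - a * q i) * f b) := sum_le_sum fun i _ => hpoint i
    _ = _ := by simp only [sum_add_distrib, ← sum_mul, sum_sub_distrib, ← mul_sum, hps, hqs]; ring

lemma rpow_mul_rpow_one_sub {x y : ℝ} (hx : 0 ≤ x) (hy : 0 < y) (α : ℝ) :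
    x ^ α * y ^ (1 - α) = y * (x / y) ^ α := by
  rw [div_rpow hx hy.le, rpow_sub hy, rpow_one]; field_simp

lemma exp_chord_rpow_eq_sinh (ε α : ℝ) :
    ((exp ε - 1) * exp (-ε) ^ α + (1 - exp (-ε)) * exp ε ^ α) / (exp ε - exp (-ε)) =
      (sinh (α * ε) - sinh ((α - 1) * ε)) / sinh ε := by
  simp only [← exp_mul, sinh_eq, sub_mul, one_mul, ← exp_add, ← sub_div]
  rw [div_div_div_cancel_right₀ two_ne_zero]
  ring_nf

theorem bounded_range_renyi_sinh_bound_general {ι : Type*} [Fintype ι]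
    (ε α : ℝ) (hε : 0 < ε) (hα : 1 < α)
    (p q : ι → ℝ) (hp : ∀ i, 0 < p i) (hq : ∀ i, 0 < q i)
    (hps : ∑ i, p i = 1) (hqs : ∑ i, q i = 1)
    (hratio : ∀ i, Real.exp (-ε) ≤ p i / q i ∧ p i / q i ≤ Real.exp ε) :
    ∑ i, p i ^ α * q i ^ (1 - α) ≤
      (Real.sinh (α * ε) - Real.sinh ((α - 1) * ε)) / Real.sinh ε := by
  have hgap : 0 < exp ε - exp (-ε) := sub_pos.2 (exp_lt_exp.2 (by linarith))
  have hchord := (convexOn_rpow hα.le).sum_mul_comp_div_le (exp_pos (-ε)).le (exp_pos ε).le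
    hq hps hqs hratio
  simp only [← rpow_mul_rpow_one_sub (hp _).le (hq _)] at hchord
  rw [← exp_chord_rpow_eq_sinh, le_div_iff₀ hgap, mul_comm]
  exact hchord

theorem bounded_range_renyi_sinh_bound {ι : Type*} [Fintype ι] [Nonempty ι]
    (ε α : ℝ) (hε : 0 < ε) (hα : 1 < α)
    (p q : ι → ℝ) (hp : ∀ i, 0 < p i) (hq : ∀ i, 0 < q i)
    (hps : ∑ i, p i = 1) (hqs : ∑ i, q i = 1)
    (hratio : ∀ i, Real.exp (-ε) ≤ p i / q i ∧ p i / q i ≤ Real.exp ε) :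
    ∑ i, p i ^ α * q i ^ (1 - α) ≤
      (Real.sinh (α * ε) - Real.sinh ((α - 1) * ε)) / Real.sinh ε :=
  bounded_range_renyi_sinh_bound_general ε α hε hα p q hp hq hps hqs hratio
end

section
/- Let σ > 0, μ₁, μ₂ ∈ ℝ, and α ∈ ℝ. Let f₁ and f₂ denote the probability density functions of the Gaussian distributions N(μ₁, σ²) and N(μ₂, σ²) on ℝ. Then ∫_ℝ (f₁(x)/f₂(x))^α · f₂(x) dx = exp( α·(α − 1)·(μ₁ − μ₂)² / (2σ²) ); in particular, for α > 1 the Rényi divergence of order α between N(μ₁, σ²) and N(μ₂, σ²) equals α·(μ₁ − μ₂)²/(2σ²). -/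
/-- Gaussian probability density function with mean `μ` and standard deviation `σ`. -/
noncomputable def gpdf (μ σ x : ℝ) : ℝ :=
  (1 / (σ * Real.sqrt (2 * Real.pi))) * Real.exp (-(x - μ) ^ 2 / (2 * σ ^ 2))

open MeasureTheory

/-! Completing the square in the exponent, `(f₁ / f₂) ^ α * f₂` is the constant
`exp (α (α - 1) (μ₁ - μ₂)² / (2σ²))` times the Gaussian density with mean `μ₂ + α (μ₁ - μ₂)`
and variance `σ²`, which integrates to `1`. -/

open Real ProbabilityTheory

lemma gpdf_eq_gaussianPDFReal (μ : ℝ) {σ : ℝ} (hσ : 0 ≤ σ) (x : ℝ) :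
    gpdf μ σ x = gaussianPDFReal μ (σ ^ 2).toNNReal x := by
  rw [gpdf, gaussianPDFReal, coe_toNNReal _ (sq_nonneg σ), mul_comm (2 * π),
    sqrt_mul (sq_nonneg σ), sqrt_sq hσ, one_div]

lemma integral_gpdf (μ : ℝ) {σ : ℝ} (hσ : 0 < σ) : ∫ x, gpdf μ σ x = 1 := by
  simp_rw [gpdf_eq_gaussianPDFReal μ hσ.le]
  exact integral_gaussianPDFReal_eq_one μ (by positivity)

lemma gpdf_div_gpdf (μ₁ μ₂ : ℝ) {σ : ℝ} (hσ : σ ≠ 0) (x : ℝ) :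
    gpdf μ₁ σ x / gpdf μ₂ σ x = exp (((x - μ₂) ^ 2 - (x - μ₁) ^ 2) / (2 * σ ^ 2)) := by
  have hc : 1 / (σ * sqrt (2 * π)) ≠ 0 := by positivity
  rw [gpdf, gpdf, mul_div_mul_left _ _ hc, ← exp_sub, ← sub_div]
  ring_nf

lemma rpow_gpdf_div_gpdf_mul_gpdf (μ₁ μ₂ α : ℝ) {σ : ℝ} (hσ : σ ≠ 0) (x : ℝ) :
    (gpdf μ₁ σ x / gpdf μ₂ σ x) ^ α * gpdf μ₂ σ x =
      exp (α * (α - 1) * (μ₁ - μ₂) ^ 2 / (2 * σ ^ 2)) * gpdf (μ₂ + α * (μ₁ - μ₂)) σ x := by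
  rw [gpdf_div_gpdf μ₁ μ₂ hσ, ← exp_mul, gpdf, gpdf, mul_left_comm, ← exp_add,
    mul_left_comm, ← exp_add]
  congr 2
  field_simp
  ring

lemma integral_rpow_gpdf_div_gpdf_mul_gpdf (μ₁ μ₂ α : ℝ) {σ : ℝ} (hσ : 0 < σ) :
    ∫ x, (gpdf μ₁ σ x / gpdf μ₂ σ x) ^ α * gpdf μ₂ σ x =
      exp (α * (α - 1) * (μ₁ - μ₂) ^ 2 / (2 * σ ^ 2)) := by
  simp_rw [rpow_gpdf_div_gpdf_mul_gpdf μ₁ μ₂ α hσ.ne']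
  rw [integral_const_mul, integral_gpdf _ hσ, mul_one]

theorem gaussian_renyi_divergence (σ μ₁ μ₂ α : ℝ) (hσ : 0 < σ) :
    (∫ x, (gpdf μ₁ σ x / gpdf μ₂ σ x) ^ α * gpdf μ₂ σ x =
        Real.exp (α * (α - 1) * (μ₁ - μ₂) ^ 2 / (2 * σ ^ 2))) ∧
    (1 < α →
      (1 / (α - 1)) *
          Real.log (∫ x, (gpdf μ₁ σ x / gpdf μ₂ σ x) ^ α * gpdf μ₂ σ x) =
        α * (μ₁ - μ₂) ^ 2 / (2 * σ ^ 2)) := by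
  have hint := integral_rpow_gpdf_div_gpdf_mul_gpdf μ₁ μ₂ α hσ
  refine ⟨hint, fun hα => ?_⟩
  have hα1 : α - 1 ≠ 0 := sub_ne_zero.mpr hα.ne'
  rw [hint, log_exp]
  field_simp
end

section
/- (RNM-Gaussian.) Let m ≥ 1, α > 1, σ > 0, and let μ = N(0, σ²) be the centered Gaussian measure on ℝ with variance σ². For C : Fin m → ℝ define P_i(C) = μ^⊗m({ r : for all j ≠ i, C i + r i > C j + r j }). Then for any C, C' : Fin m → ℝ with |C i − C' i| ≤ 1 for all i, Σ_{i=1}^{m} P_i(C)^α · P_i(C')^{1−α} ≤ m · exp( 2·α·(α − 1)/σ² ); equivalently, Report-Noisy-Max with Gaussian noise N(0, σ²) satisfies (α, 2α/σ² + (log m)/(α − 1))-RDP. -/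
/-!
Write `P` for the noise law `N(0, σ²)^⊗m` and `Q` for its translate by `2 • Pi.single i 1`.
Raising the noise of coordinate `i` by `2` turns every noise vector on which `i` wins for the
scores `C` into one on which `i` wins for `C'`, since every score moves by at most `1`; hence
`P_i(C) ≤ Q(B)` with `B` the winning event of `i` for `C'`. Hölder's inequality against the
likelihood ratio `dQ/dP` gives `Q(B)^α ≤ E_P[(dQ/dP)^α] · P(B)^(α-1)`, and this Gaussian moment
equals `exp (2α(α-1)/σ²)`, so each of the `m` terms of the Rényi sum is at most that.
-/

open MeasureTheory ProbabilityTheory Real Set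
open scoped ENNReal NNReal

section Pi

variable {ι : Type*} [Fintype ι] {X : ι → Type*} [∀ i, MeasurableSpace (X i)]
  (μ : ∀ i, Measure (X i)) [∀ i, IsProbabilityMeasure (μ i)]

theorem lintegral_pi_prod_eq_prod {f : ∀ i, X i → ℝ≥0∞} (hf : ∀ i, Measurable (f i)) :
    ∫⁻ x, ∏ i, f i (x i) ∂Measure.pi μ = ∏ i, ∫⁻ y, f i y ∂μ i := by
  rw [lintegral_prod_eq_prod_lintegral_of_indepFun _ _
    (iIndepFun_pi fun i => (hf i).aemeasurable) fun i => (hf i).comp (measurable_pi_apply i)]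
  exact Finset.prod_congr rfl fun i _ => (measurePreserving_eval μ i).lintegral_comp (hf i)

theorem Measure.pi_eq_withDensity_prod {ν : ∀ i, Measure (X i)} [∀ i, SigmaFinite (ν i)]
    {f : ∀ i, X i → ℝ≥0∞} (hf : ∀ i, Measurable (f i))
    (hν : ∀ i, ν i = (μ i).withDensity (f i)) :
    Measure.pi ν = (Measure.pi μ).withDensity fun x => ∏ i, f i (x i) := by
  refine Measure.pi_eq fun s hs => ?_
  have hind : (univ.pi s).indicator (fun x => ∏ i, f i (x i))
      = fun x => ∏ i, (s i).indicator (f i) (x i) := by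
    ext x
    by_cases hx : ∀ i, x i ∈ s i
    · rw [indicator_of_mem (mem_univ_pi.2 hx)]
      exact Finset.prod_congr rfl fun i _ => (indicator_of_mem (hx i) _).symm
    · obtain ⟨i, hi⟩ := not_forall.1 hx
      rw [indicator_of_notMem (mt mem_univ_pi.1 hx)]
      exact (Finset.prod_eq_zero (Finset.mem_univ i) (indicator_of_notMem hi _)).symm
  rw [withDensity_apply _ (.univ_pi hs), ← lintegral_indicator (.univ_pi hs), hind,
    lintegral_pi_prod_eq_prod μ fun i => (hf i).indicator (hs i)]
  exact Finset.prod_congr rfl fun i _ => by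
    rw [hν i, withDensity_apply _ (hs i), lintegral_indicator (hs i)]

end Pi

theorem withDensity_apply_rpow_le {X : Type*} [MeasurableSpace X] (μ : Measure X)
    {f : X → ℝ≥0∞} (hf : Measurable f) {B : Set X} (hB : MeasurableSet B) {α : ℝ} (hα : 1 < α) :
    μ.withDensity f B ^ α ≤ (∫⁻ x, f x ^ α ∂μ) * μ B ^ (α - 1) := by
  have hα0 : 0 < α := by linarith
  have holder := ENNReal.lintegral_mul_norm_pow_le (μ := μ) (hf.pow_const α).aemeasurable
    ((measurable_const.indicator hB).aemeasurable (f := B.indicator fun _ => (1 : ℝ≥0∞)))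
    (p := 1 / α) (q := (α - 1) / α) (by positivity) (div_nonneg (by linarith) hα0.le)
    (by field_simp; ring)
  have hlhs : ∫⁻ x, (f x ^ α) ^ (1 / α) * (B.indicator (fun _ => 1) x) ^ ((α - 1) / α) ∂μ
      = μ.withDensity f B := by
    rw [withDensity_apply _ hB, ← lintegral_indicator hB]
    congr 1 with x
    by_cases hx : x ∈ B
    · simp [hx, ← ENNReal.rpow_mul, hα0.ne']
    · simp [hx, ENNReal.zero_rpow_of_pos (div_pos (sub_pos.2 hα) hα0)]
  rw [hlhs, lintegral_indicator_const hB, one_mul] at holder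
  calc μ.withDensity f B ^ α
      ≤ ((∫⁻ x, f x ^ α ∂μ) ^ (1 / α) * μ B ^ ((α - 1) / α)) ^ α :=
        ENNReal.rpow_le_rpow holder hα0.le
    _ = (∫⁻ x, f x ^ α ∂μ) * μ B ^ (α - 1) := by
        rw [ENNReal.mul_rpow_of_nonneg _ _ hα0.le, ← ENNReal.rpow_mul, ← ENNReal.rpow_mul,
          one_div_mul_cancel hα0.ne', div_mul_cancel₀ _ hα0.ne', ENNReal.rpow_one]

theorem rpow_mul_rpow_one_sub_le {p q K α : ℝ} (hq : 0 ≤ q) (hK : 0 ≤ K) (hα : 1 < α)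
    (h : p ^ α ≤ K * q ^ (α - 1)) : p ^ α * q ^ (1 - α) ≤ K := by
  rcases hq.eq_or_lt with rfl | hq
  · rw [Real.zero_rpow (by linarith), mul_zero]
    exact hK
  · calc p ^ α * q ^ (1 - α) ≤ K * q ^ (α - 1) * q ^ (1 - α) :=
          mul_le_mul_of_nonneg_right h (Real.rpow_nonneg hq.le _)
      _ = K := by rw [mul_assoc, ← Real.rpow_add hq]; simp

theorem toReal_rpow_mul_toReal_rpow_one_sub_le {p q : ℝ≥0∞} {K α : ℝ} (hq : q ≠ ∞) (hK : 0 ≤ K)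
    (hα : 1 < α) (h : p ^ α ≤ ENNReal.ofReal K * q ^ (α - 1)) :
    p.toReal ^ α * q.toReal ^ (1 - α) ≤ K := by
  refine rpow_mul_rpow_one_sub_le ENNReal.toReal_nonneg hK hα ?_
  have hfin : ENNReal.ofReal K * q ^ (α - 1) ≠ ∞ :=
    ENNReal.mul_ne_top ENNReal.ofReal_ne_top (ENNReal.rpow_ne_top_of_nonneg (by linarith) hq)
  simpa only [ENNReal.toReal_mul, ENNReal.toReal_rpow, ENNReal.toReal_ofReal hK]
    using ENNReal.toReal_mono hfin h

noncomputable def gaussianLikelihoodRatio (v : ℝ≥0) (a x : ℝ) : ℝ≥0∞ :=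
  ENNReal.ofReal (exp ((2 * a * x - a ^ 2) / (2 * v)))

@[fun_prop]
theorem measurable_gaussianLikelihoodRatio (v : ℝ≥0) (a : ℝ) :
    Measurable (gaussianLikelihoodRatio v a) := by
  unfold gaussianLikelihoodRatio
  fun_prop

theorem gaussianLikelihoodRatio_rpow (v : ℝ≥0) (a α x : ℝ) :
    gaussianLikelihoodRatio v a x ^ α
      = ENNReal.ofReal (exp (α * (α - 1) * a ^ 2 / (2 * v)))
          * gaussianLikelihoodRatio v (α * a) x := by
  rw [gaussianLikelihoodRatio, gaussianLikelihoodRatio, ENNReal.ofReal_rpow_of_pos (exp_pos _),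
    ← ENNReal.ofReal_mul (exp_nonneg _), ← exp_mul, ← exp_add]
  congr 2
  ring

section Gaussian

variable {v : ℝ≥0}

theorem gaussianReal_eq_withDensity_likelihoodRatio (hv : v ≠ 0) (a : ℝ) :
    gaussianReal a v = (gaussianReal 0 v).withDensity (gaussianLikelihoodRatio v a) := by
  rw [gaussianReal_of_var_ne_zero _ hv, gaussianReal_of_var_ne_zero _ hv,
    ← withDensity_mul _ (measurable_gaussianPDF _ _) (measurable_gaussianLikelihoodRatio v a)]
  congr 1 with x
  rw [Pi.mul_apply, gaussianPDF, gaussianPDF, gaussianLikelihoodRatio,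
    ← ENNReal.ofReal_mul (gaussianPDFReal_nonneg _ _ _), gaussianPDFReal, gaussianPDFReal,
    mul_assoc (√_)⁻¹, ← exp_add]
  congr 3
  have : (v : ℝ) ≠ 0 := NNReal.coe_ne_zero.2 hv
  field_simp
  ring

theorem lintegral_gaussianLikelihoodRatio_rpow (hv : v ≠ 0) (a α : ℝ) :
    ∫⁻ x, gaussianLikelihoodRatio v a x ^ α ∂gaussianReal 0 v
      = ENNReal.ofReal (exp (α * (α - 1) * a ^ 2 / (2 * v))) := by
  simp_rw [gaussianLikelihoodRatio_rpow]
  rw [lintegral_const_mul _ (measurable_gaussianLikelihoodRatio _ _), ← setLIntegral_univ,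
    ← withDensity_apply _ MeasurableSet.univ,
    ← gaussianReal_eq_withDensity_likelihoodRatio hv, measure_univ, mul_one]

variable {ι : Type*} [Fintype ι]

theorem pi_gaussianReal_eq_withDensity (hv : v ≠ 0) (a : ι → ℝ) :
    Measure.pi (fun i => gaussianReal (a i) v)
      = (Measure.pi fun _ : ι => gaussianReal 0 v).withDensity
          fun x => ∏ i, gaussianLikelihoodRatio v (a i) (x i) :=
  Measure.pi_eq_withDensity_prod _ (fun i => measurable_gaussianLikelihoodRatio v (a i))
    fun i => gaussianReal_eq_withDensity_likelihoodRatio hv (a i)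

theorem lintegral_prod_gaussianLikelihoodRatio_rpow (hv : v ≠ 0) (a : ι → ℝ) {α : ℝ}
    (hα : 0 ≤ α) :
    ∫⁻ x, (∏ i, gaussianLikelihoodRatio v (a i) (x i)) ^ α ∂(Measure.pi fun _ => gaussianReal 0 v)
      = ENNReal.ofReal (exp (α * (α - 1) * (∑ i, a i ^ 2) / (2 * v))) := by
  simp_rw [← ENNReal.prod_rpow_of_nonneg hα]
  rw [lintegral_pi_prod_eq_prod _ fun i => (measurable_gaussianLikelihoodRatio v (a i)).pow_const α]
  simp_rw [lintegral_gaussianLikelihoodRatio_rpow hv]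
  rw [← ENNReal.ofReal_prod_of_nonneg fun _ _ => (exp_pos _).le, ← exp_sum, Finset.mul_sum,
    Finset.sum_div]

theorem measurePreserving_add_pi_gaussianReal (a : ι → ℝ) :
    MeasurePreserving (· + a) (Measure.pi fun _ => gaussianReal 0 v)
      (Measure.pi fun i => gaussianReal (a i) v) :=
  measurePreserving_pi _ _ fun i =>
    ⟨measurable_add_const (a i), by rw [gaussianReal_map_add_const, zero_add]⟩

theorem pi_gaussianReal_rpow_le_of_subset_preimage_add (hv : v ≠ 0) {α : ℝ} (hα : 1 < α)
    (a : ι → ℝ) {A B : Set (ι → ℝ)} (hB : MeasurableSet B) (hAB : A ⊆ (· + a) ⁻¹' B) :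
    (Measure.pi fun _ => gaussianReal 0 v) A ^ α
      ≤ ENNReal.ofReal (exp (α * (α - 1) * (∑ i, a i ^ 2) / (2 * v)))
          * (Measure.pi fun _ => gaussianReal 0 v) B ^ (α - 1) := by
  have hshift : (Measure.pi fun _ => gaussianReal 0 v) A
      ≤ Measure.pi (fun i => gaussianReal (a i) v) B :=
    (measure_mono hAB).trans_eq
      ((measurePreserving_add_pi_gaussianReal a).measure_preimage hB.nullMeasurableSet)
  calc (Measure.pi fun _ => gaussianReal 0 v) A ^ α
      ≤ Measure.pi (fun i => gaussianReal (a i) v) B ^ α :=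
        ENNReal.rpow_le_rpow hshift (by linarith)
    _ ≤ _ := by
        rw [pi_gaussianReal_eq_withDensity hv,
          ← lintegral_prod_gaussianLikelihoodRatio_rpow hv a (by linarith : (0 : ℝ) ≤ α)]
        exact withDensity_apply_rpow_le _ (by fun_prop) hB hα

end Gaussian

section ReportNoisyMax

variable {ι : Type*}

def reportNoisyMaxSet (C : ι → ℝ) (i : ι) : Set (ι → ℝ) :=
  {r | ∀ j, j ≠ i → C i + r i > C j + r j}

theorem measurableSet_reportNoisyMaxSet [Countable ι] (C : ι → ℝ) (i : ι) :
    MeasurableSet (reportNoisyMaxSet C i) := by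
  rw [reportNoisyMaxSet, ofPred_forall]
  refine .iInter fun j => ?_
  rw [ofPred_forall]
  exact .iInter fun _ => measurableSet_lt (by fun_prop) (by fun_prop)

theorem reportNoisyMaxSet_subset_preimage_add [DecidableEq ι] {C C' : ι → ℝ}
    (hCC' : ∀ i, |C i - C' i| ≤ 1) (i : ι) :
    reportNoisyMaxSet C i ⊆ (· + Pi.single i 2) ⁻¹' reportNoisyMaxSet C' i := by
  intro r hr j hj
  have hi := abs_le.1 (hCC' i)
  have hj' := abs_le.1 (hCC' j)
  have := hr j hj
  simp only [Pi.add_apply, Pi.single_eq_same, Pi.single_eq_of_ne hj]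
  linarith

theorem reportNoisyMax_gaussian_term_le [Fintype ι] {v : ℝ≥0} (hv : v ≠ 0) {α : ℝ} (hα : 1 < α)
    {C C' : ι → ℝ} (hCC' : ∀ i, |C i - C' i| ≤ 1) (i : ι) :
    ((Measure.pi fun _ => gaussianReal 0 v) (reportNoisyMaxSet C i)).toReal ^ α
        * ((Measure.pi fun _ => gaussianReal 0 v) (reportNoisyMaxSet C' i)).toReal ^ (1 - α)
      ≤ exp (2 * α * (α - 1) / v) := by
  classical
  refine toReal_rpow_mul_toReal_rpow_one_sub_le (measure_ne_top _ _) (exp_pos _).le hα ?_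
  have hsum : ∑ j, Pi.single (M := fun _ => ℝ) i 2 j ^ 2 = 4 := by
    rw [Finset.sum_eq_single i (fun j _ hj => by simp [hj]) (by simp)]
    norm_num
  have key := pi_gaussianReal_rpow_le_of_subset_preimage_add hv hα _
    (measurableSet_reportNoisyMaxSet C' i) (reportNoisyMaxSet_subset_preimage_add hCC' i)
  rwa [hsum, show α * (α - 1) * 4 / (2 * v) = 2 * α * (α - 1) / v by ring] at key

end ReportNoisyMax

theorem rnm_gaussian_rdp_general {m : ℕ} (α σ : ℝ) (hα : 1 < α) (hσ : 0 < σ)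
    (C C' : Fin m → ℝ) (hCC' : ∀ i, |C i - C' i| ≤ 1) :
    ∑ i : Fin m,
        ((Measure.pi fun _ : Fin m => gaussianReal 0 ⟨σ ^ 2, sq_nonneg σ⟩)
            {r : Fin m → ℝ | ∀ j, j ≠ i → C i + r i > C j + r j}).toReal ^ α *
          ((Measure.pi fun _ : Fin m => gaussianReal 0 ⟨σ ^ 2, sq_nonneg σ⟩)
            {r : Fin m → ℝ | ∀ j, j ≠ i → C' i + r i > C' j + r j}).toReal ^ (1 - α) ≤
      m * Real.exp (2 * α * (α - 1) / σ ^ 2) := by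
  have hv : (⟨σ ^ 2, sq_nonneg σ⟩ : ℝ≥0) ≠ 0 :=
    fun h => (pow_pos hσ 2).ne' (congrArg Subtype.val h)
  calc _ ≤ ∑ _i : Fin m, exp (2 * α * (α - 1) / σ ^ 2) :=
        Finset.sum_le_sum fun i _ => reportNoisyMax_gaussian_term_le hv hα hCC' i
    _ = m * exp (2 * α * (α - 1) / σ ^ 2) := by simp

theorem rnm_gaussian_rdp {m : ℕ} (hm : 1 ≤ m) (α σ : ℝ) (hα : 1 < α) (hσ : 0 < σ)
    (C C' : Fin m → ℝ) (hCC' : ∀ i, |C i - C' i| ≤ 1) :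
    ∑ i : Fin m,
        ((Measure.pi fun _ : Fin m => gaussianReal 0 ⟨σ ^ 2, sq_nonneg σ⟩)
            {r : Fin m → ℝ | ∀ j, j ≠ i → C i + r i > C j + r j}).toReal ^ α *
          ((Measure.pi fun _ : Fin m => gaussianReal 0 ⟨σ ^ 2, sq_nonneg σ⟩)
            {r : Fin m → ℝ | ∀ j, j ≠ i → C' i + r i > C' j + r j}).toReal ^ (1 - α) ≤
      m * Real.exp (2 * α * (α - 1) / σ ^ 2) :=
  rnm_gaussian_rdp_general α σ hα hσ C C' hCC'
end

section
/- (RDP core of PTR-Gaussian via binarization.) Let σ > 0, α > 1, and let q, q' ∈ ℝ with |q − q'| ≤ 1. Let γ = N(0, σ²) and set a = γ({ z : q + z > 1 }) and a' = γ({ z : q' + z > 1 }), assuming 0 < a' < 1. Then a^α · (a')^(1−α) + (1 − a)^α · (1 − a')^(1−α) ≤ exp( α·(α − 1)/(2σ²) ); i.e., the Rényi divergence of order α between the binary outcomes of the noisy threshold test on neighboring gaps is at most α/(2σ²). -/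
open MeasureTheory ProbabilityTheory
open scoped NNReal ENNReal

/-!
Thresholding is post-processing, so the bound is an instance of data processing for Rényi
divergences. For densities `p, p'` and a set `s`, Hölder's inequality gives
`P(s)^α P'(s)^(1-α) ≤ ∫_s p^α p'^(1-α)`; adding this over `s` and `sᶜ` bounds the binary sum by
`∫ p^α p'^(1-α)`. For Gaussians of common variance `V` and means `m, m'`, completing the square
shows that `p^α p'^(1-α)` is `exp (α(α-1)(m-m')²/(2V))` times the Gaussian density with mean
`αm + (1-α)m'`, so the integral equals that exponential, and `|m - m'| ≤ 1` finishes.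
-/

namespace ENNReal

variable {X : Type*} [MeasurableSpace X] {μ : Measure X} {f g : X → ℝ≥0∞} {α : ℝ}

theorem lintegral_rpow_mul_lintegral_rpow_one_sub_le (hα : 1 < α) (hf : AEMeasurable f μ)
    (hg : AEMeasurable g μ) (hg0 : ∀ᵐ x ∂μ, g x ≠ 0) (hgtop : ∀ᵐ x ∂μ, g x ≠ ⊤)
    (hG0 : ∫⁻ x, g x ∂μ ≠ 0) (hGtop : ∫⁻ x, g x ∂μ ≠ ⊤) :
    (∫⁻ x, f x ∂μ) ^ α * (∫⁻ x, g x ∂μ) ^ (1 - α) ≤ ∫⁻ x, f x ^ α * g x ^ (1 - α) ∂μ := by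
  have hα0 : 0 < α := zero_lt_one.trans hα
  set I := ∫⁻ x, f x ^ α * g x ^ (1 - α) ∂μ
  set G := ∫⁻ x, g x ∂μ
  -- Hölder with exponents `1/α` and `1 - 1/α`, after factoring `f = (f^α g^(1-α))^(1/α) g^(1-1/α)`.
  have holder : ∫⁻ x, f x ∂μ ≤ I ^ α⁻¹ * G ^ (1 - α⁻¹) := by
    calc ∫⁻ x, f x ∂μ = ∫⁻ x, (f x ^ α * g x ^ (1 - α)) ^ α⁻¹ * g x ^ (1 - α⁻¹) ∂μ := by
          refine lintegral_congr_ae ?_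
          filter_upwards [hg0, hgtop] with x hx0 hxtop
          rw [mul_rpow_of_nonneg _ _ (inv_nonneg.2 hα0.le), ← rpow_mul, ← rpow_mul,
            mul_inv_cancel₀ hα0.ne', rpow_one, mul_assoc, ← rpow_add _ _ hx0 hxtop]
          have : (1 - α) * α⁻¹ + (1 - α⁻¹) = 0 := by field_simp; ring
          rw [this, rpow_zero, mul_one]
      _ ≤ I ^ α⁻¹ * G ^ (1 - α⁻¹) :=
          lintegral_mul_norm_pow_le ((hf.pow_const α).mul (hg.pow_const _)) hg
            (inv_nonneg.2 hα0.le) (sub_nonneg.2 (inv_le_one_of_one_le₀ hα.le)) (by ring)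
  calc (∫⁻ x, f x ∂μ) ^ α * G ^ (1 - α) ≤ (I ^ α⁻¹ * G ^ (1 - α⁻¹)) ^ α * G ^ (1 - α) := by
        gcongr
    _ = I := by
        rw [mul_rpow_of_nonneg _ _ hα0.le, ← rpow_mul, ← rpow_mul, inv_mul_cancel₀ hα0.ne',
          rpow_one, mul_assoc, ← rpow_add _ _ hG0 hGtop]
        have : (1 - α⁻¹) * α + (1 - α) = 0 := by field_simp; ring
        rw [this, rpow_zero, mul_one]

end ENNReal

section

variable {X : Type*} [MeasurableSpace X] {μ : Measure X} {f g : X → ℝ≥0∞} {α : ℝ}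

theorem withDensity_rpow_mul_rpow_one_sub_add_compl_le (hα : 1 < α) (hf : Measurable f)
    (hg : Measurable g) (hg0 : ∀ x, g x ≠ 0) (hgtop : ∀ x, g x ≠ ⊤) {s : Set X}
    (hs : MeasurableSet s) (hQs0 : μ.withDensity g s ≠ 0) (hQstop : μ.withDensity g s ≠ ⊤)
    (hQsc0 : μ.withDensity g sᶜ ≠ 0) (hQsctop : μ.withDensity g sᶜ ≠ ⊤) :
    μ.withDensity f s ^ α * μ.withDensity g s ^ (1 - α)
        + μ.withDensity f sᶜ ^ α * μ.withDensity g sᶜ ^ (1 - α)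
      ≤ ∫⁻ x, f x ^ α * g x ^ (1 - α) ∂μ := by
  have hpiece : ∀ t, MeasurableSet t → μ.withDensity g t ≠ 0 → μ.withDensity g t ≠ ⊤ →
      μ.withDensity f t ^ α * μ.withDensity g t ^ (1 - α)
        ≤ ∫⁻ x in t, f x ^ α * g x ^ (1 - α) ∂μ := by
    intro t ht h0 htop
    rw [withDensity_apply _ ht] at h0 htop ⊢
    rw [withDensity_apply _ ht]
    exact ENNReal.lintegral_rpow_mul_lintegral_rpow_one_sub_le hα hf.aemeasurable
      hg.aemeasurable (.of_forall hg0) (.of_forall hgtop) h0 htop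
  calc _ ≤ ∫⁻ x in s, f x ^ α * g x ^ (1 - α) ∂μ + ∫⁻ x in sᶜ, f x ^ α * g x ^ (1 - α) ∂μ :=
        add_le_add (hpiece s hs hQs0 hQstop) (hpiece sᶜ hs.compl hQsc0 hQsctop)
    _ = _ := lintegral_add_compl _ hs

end

open Real in
theorem gaussianPDFReal_rpow_mul_rpow_one_sub {V : ℝ≥0} (hV : V ≠ 0) (m m' α x : ℝ) :
    gaussianPDFReal m V x ^ α * gaussianPDFReal m' V x ^ (1 - α)
      = exp (α * (α - 1) * (m - m') ^ 2 / (2 * V)) * gaussianPDFReal (α * m + (1 - α) * m') V x := by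
  have hc : 0 < (√(2 * π * V))⁻¹ := by positivity
  simp only [gaussianPDFReal, mul_rpow hc.le (exp_nonneg _), ← exp_mul]
  have hV' : (V : ℝ) ≠ 0 := by exact_mod_cast hV
  calc _ = ((√(2 * π * V))⁻¹ ^ α * (√(2 * π * V))⁻¹ ^ (1 - α)) *
        exp (-(x - m) ^ 2 / (2 * V) * α + -(x - m') ^ 2 / (2 * V) * (1 - α)) := by
        rw [exp_add]; ring
    _ = _ := by
        rw [← rpow_add hc, add_sub_cancel, rpow_one, mul_left_comm, ← exp_add]
        congr 2
        field_simp
        ring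

theorem lintegral_gaussianPDF_rpow_mul_rpow_one_sub {V : ℝ≥0} (hV : V ≠ 0) (m m' α : ℝ) :
    ∫⁻ x, gaussianPDF m V x ^ α * gaussianPDF m' V x ^ (1 - α)
      = ENNReal.ofReal (Real.exp (α * (α - 1) * (m - m') ^ 2 / (2 * V))) := by
  have hpt : ∀ x, gaussianPDF m V x ^ α * gaussianPDF m' V x ^ (1 - α)
      = ENNReal.ofReal (Real.exp (α * (α - 1) * (m - m') ^ 2 / (2 * V)))
        * gaussianPDF (α * m + (1 - α) * m') V x := by
    intro x
    simp only [gaussianPDF_def, ENNReal.ofReal_rpow_of_pos (gaussianPDFReal_pos _ _ _ hV),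
      ← ENNReal.ofReal_mul (Real.rpow_nonneg (gaussianPDFReal_nonneg _ _ _) _),
      gaussianPDFReal_rpow_mul_rpow_one_sub hV, ENNReal.ofReal_mul (Real.exp_nonneg _)]
  simp_rw [hpt]
  rw [lintegral_const_mul _ (measurable_gaussianPDF _ _), lintegral_gaussianPDF_eq_one _ hV,
    mul_one]

theorem gaussianReal_rpow_mul_rpow_one_sub_add_compl_le {V : ℝ≥0} (hV : V ≠ 0) {α : ℝ}
    (hα : 1 < α) (m m' : ℝ) {s : Set ℝ} (hs : MeasurableSet s) (hs0 : gaussianReal m' V s ≠ 0)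
    (hsc0 : gaussianReal m' V sᶜ ≠ 0) :
    gaussianReal m V s ^ α * gaussianReal m' V s ^ (1 - α)
        + gaussianReal m V sᶜ ^ α * gaussianReal m' V sᶜ ^ (1 - α)
      ≤ ENNReal.ofReal (Real.exp (α * (α - 1) * (m - m') ^ 2 / (2 * V))) := by
  have hstop := measure_ne_top (gaussianReal m' V) s
  have hsctop := measure_ne_top (gaussianReal m' V) sᶜ
  rw [← lintegral_gaussianPDF_rpow_mul_rpow_one_sub hV]
  simp only [gaussianReal_of_var_ne_zero _ hV] at hs0 hsc0 hstop hsctop ⊢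
  exact withDensity_rpow_mul_rpow_one_sub_add_compl_le hα (measurable_gaussianPDF _ _)
    (measurable_gaussianPDF _ _) (fun x ↦ (gaussianPDF_pos _ hV x).ne') (fun _ ↦ gaussianPDF_ne_top)
    hs hs0 hstop hsc0 hsctop

theorem gaussianReal_setOf_add_gt {V : ℝ≥0} (r c : ℝ) :
    gaussianReal 0 V {z | r + z > c} = gaussianReal r V (Set.Ioi c) := by
  have hmap := gaussianReal_map_add_const (μ := 0) (v := V) r
  rw [zero_add] at hmap
  rw [← hmap, Measure.map_apply (measurable_add_const r) measurableSet_Ioi]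
  congr 1
  ext z
  show c < r + z ↔ c < z + r
  rw [add_comm]

theorem ptr_gaussian_binary_rdp (σ α q q' : ℝ) (hσ : 0 < σ) (hα : 1 < α)
    (hqq : |q - q'| ≤ 1) (a a' : ℝ)
    (ha : a = (gaussianReal 0 ⟨σ ^ 2, sq_nonneg σ⟩ {z : ℝ | q + z > 1}).toReal)
    (ha' : a' = (gaussianReal 0 ⟨σ ^ 2, sq_nonneg σ⟩ {z : ℝ | q' + z > 1}).toReal)
    (ha'pos : 0 < a') (ha'lt : a' < 1) :
    a ^ α * a' ^ (1 - α) + (1 - a) ^ α * (1 - a') ^ (1 - α) ≤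
      Real.exp (α * (α - 1) / (2 * σ ^ 2)) := by
  set V : ℝ≥0 := ⟨σ ^ 2, sq_nonneg σ⟩
  have hV : V ≠ 0 := by rw [← NNReal.coe_ne_zero]; exact pow_ne_zero 2 hσ.ne'
  rw [gaussianReal_setOf_add_gt] at ha ha'
  have hcompl : ∀ r, 1 - (gaussianReal r V (Set.Ioi 1)).toReal
      = (gaussianReal r V (Set.Ioi 1)ᶜ).toReal := fun r ↦ by
    rw [prob_compl_eq_one_sub measurableSet_Ioi,
      ENNReal.toReal_sub_of_le prob_le_one ENNReal.one_ne_top, ENNReal.toReal_one]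
  have hs0 : gaussianReal q' V (Set.Ioi 1) ≠ 0 := fun h ↦ by
    rw [ha', h] at ha'pos; simp at ha'pos
  have hsc0 : gaussianReal q' V (Set.Ioi 1)ᶜ ≠ 0 := fun h ↦ by
    rw [ha', ← sub_pos, hcompl, h] at ha'lt; simp at ha'lt
  have hbin := gaussianReal_rpow_mul_rpow_one_sub_add_compl_le hV hα q q' measurableSet_Ioi hs0 hsc0
  have hexp : Real.exp (α * (α - 1) * (q - q') ^ 2 / (2 * V))
      ≤ Real.exp (α * (α - 1) / (2 * σ ^ 2)) := by
    have hsq : (q - q') ^ 2 ≤ 1 := (sq_le_one_iff_abs_le_one _).2 hqq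
    rw [Real.exp_le_exp, show (V : ℝ) = σ ^ 2 from rfl]
    refine div_le_div_of_nonneg_right ?_ (by positivity)
    exact mul_le_of_le_one_right (by nlinarith) hsq
  obtain ⟨hfin, hfin'⟩ := ENNReal.add_ne_top.1 (hbin.trans_lt ENNReal.ofReal_lt_top).ne
  subst ha ha'
  rw [hcompl, hcompl, ENNReal.toReal_rpow, ENNReal.toReal_rpow, ENNReal.toReal_rpow,
    ENNReal.toReal_rpow, ← ENNReal.toReal_mul, ← ENNReal.toReal_mul,
    ← ENNReal.toReal_add hfin hfin']
  exact ENNReal.toReal_le_of_le_ofReal (Real.exp_nonneg _)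
    (hbin.trans (ENNReal.ofReal_le_ofReal hexp))
end
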